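/- Let F_q be a finite field of characteristic p, let H be a subgroup of F_q^×, and let χ : H → ℂ^× be a character. Let S be a set of representatives of the H-orbits of F_q (if χ is trivial) or of F_q^× (if χ is nontrivial). Then the set of χ-symmetric functions from F_q to ℂ is a ℂ-vector space of dimension |S|, and the ℂ-linear map sending a χ-symmetric function f to the restriction of its Fourier transform f̂ to S is a vector space isomorphism onto ℂ^S. -/

import Mathlib

/-!
Evaluation at `S` is an isomorphism from the `χ`-symmetric functions onto `ℂ^S`: such a function
is determined by its values on `S` (when `χ ≠ 1` it vanishes at `0`, which is why `0` is then
left out of `S`), and arbitrary values on `S` extend, because `h r = h' r'` with `r, r' ∈ S`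
forces `r = r'` and `χ h = χ h'`. The Fourier transform for the primitive character `ε` is
injective by Fourier inversion, and `f̂(h a) = χ(h)⁻¹ f̂(a)`, so it sends `χ`-symmetric functions
to `χ⁻¹`-symmetric ones, for which `S` is again a set of representatives. Hence `f ↦ f̂|_S` is
injective, and so bijective, between spaces of the same dimension `|S|`.
-/

open Complex

/-- The canonical additive character of a finite field `F` of characteristic `p`:
`ε(x) = exp(2πi·Tr(x)/p)`, where `Tr : F → F_p` is the absolute trace. -/
noncomputable def canonicalAddChar (p : ℕ) [Fact p.Prime] (F : Type*) [Field F]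
    [CharP F p] (x : F) : ℂ :=
  letI := ZMod.algebra F p
  Complex.exp (2 * Real.pi * Complex.I * ((Algebra.trace (ZMod p) F x).val : ℕ) / p)

/-- `R` is a set of representatives of the orbits of the multiplication action of the
subgroup `H ≤ Fˣ` on the subset `X` of `F`. -/
def IsOrbitReprSet {F : Type*} [Field F] (H : Subgroup Fˣ) (X : Set F)
    (R : Finset F) : Prop :=
  ↑R ⊆ X ∧ ∀ x ∈ X, ∃! r, r ∈ R ∧ ∃ h : H, ((h : Fˣ) : F) * r = x

section Symmetric

variable {F K : Type*} [Field F] [Field K] {H : Subgroup Fˣ} {χ : H →* Kˣ}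

variable (H χ) in
def symmetricSubmodule : Submodule K (F → K) where
  carrier := {f | ∀ (h : H) (x : F), f (((h : Fˣ) : F) * x) = (χ h : K) * f x}
  add_mem' hf hg h x := by simp only [Pi.add_apply, hf h x, hg h x, mul_add]
  zero_mem' h x := by simp
  smul_mem' c f hf h x := by simp only [Pi.smul_apply, hf h x, smul_eq_mul, mul_left_comm]

theorem mem_symmetricSubmodule {f : F → K} :
    f ∈ symmetricSubmodule H χ ↔ ∀ (h : H) (x : F), f (((h : Fˣ) : F) * x) = (χ h : K) * f x :=
  Iff.rfl

theorem apply_zero_eq_zero_of_mem_symmetricSubmodule {f : F → K}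
    (hf : f ∈ symmetricSubmodule H χ) (hχ : χ ≠ 1) : f 0 = 0 := by
  obtain ⟨h, hh⟩ : ∃ h, χ h ≠ 1 := by
    by_contra! hall
    exact hχ (MonoidHom.ext hall)
  have hfix := hf h 0
  rw [mul_zero] at hfix
  exact eq_zero_of_mul_eq_self_left (Units.val_eq_one.not.mpr hh) hfix.symm

variable (H χ) in
def IsSymmetricReprSet (S : Finset F) : Prop :=
  (χ = 1 → IsOrbitReprSet H Set.univ S) ∧ (χ ≠ 1 → IsOrbitReprSet H {x | x ≠ 0} S)

open Classical in
variable (χ) in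
noncomputable def symmetricExtension (S : Finset F) (g : S → K) (x : F) : K :=
  if hx : ∃ c : H × S, ((c.1 : Fˣ) : F) * c.2 = x then χ hx.choose.1 * g hx.choose.2 else 0

namespace IsSymmetricReprSet

variable {S : Finset F} (hS : IsSymmetricReprSet H χ S)
include hS

theorem inv : IsSymmetricReprSet H χ⁻¹ S := by
  have hχ : χ⁻¹ = 1 ↔ χ = 1 := by
    simp only [MonoidHom.ext_iff, MonoidHom.inv_apply, MonoidHom.one_apply, inv_eq_one]
  simpa only [IsSymmetricReprSet, ne_eq, hχ] using hS

theorem existsUnique_of_ne_zero {x : F} (hx : x ≠ 0) :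
    ∃! r, r ∈ S ∧ ∃ h : H, ((h : Fˣ) : F) * r = x := by
  by_cases hχ : χ = 1
  · exact (hS.1 hχ).2 x trivial
  · exact (hS.2 hχ).2 x hx

theorem zero_mem (hχ : χ = 1) : (0 : F) ∈ S := by
  obtain ⟨r, ⟨hr, h, hhr⟩, -⟩ := (hS.1 hχ).2 0 trivial
  rwa [← (mul_eq_zero.mp hhr).resolve_left (Units.ne_zero _)]

theorem eq_and_eq_of_mul_eq {h h' : H} {r r' : F} (hr : r ∈ S) (hr' : r' ∈ S)
    (he : ((h : Fˣ) : F) * r = ((h' : Fˣ) : F) * r') : r = r' ∧ χ h = χ h' := by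
  rcases eq_or_ne r 0 with rfl | hr0
  · have hr'0 : r' = 0 := by
      simpa [eq_comm (a := (0 : F))] using he
    refine ⟨hr'0.symm, ?_⟩
    by_cases hχ : χ = 1
    · simp [hχ]
    · exact absurd hr ((hS.2 hχ).1 · rfl)
  · have hx : ((h : Fˣ) : F) * r ≠ 0 := mul_ne_zero (Units.ne_zero _) hr0
    have hrr' : r = r' := (hS.existsUnique_of_ne_zero hx).unique ⟨hr, h, rfl⟩ ⟨hr', h', he.symm⟩
    subst hrr'
    have hhh' : h = h' := Subtype.ext (Units.ext (mul_right_cancel₀ hr0 he))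
    exact ⟨rfl, congrArg χ hhh'⟩

theorem eq_zero_of_forall_mem_eq_zero {f : F → K} (hf : f ∈ symmetricSubmodule H χ)
    (hfS : ∀ s ∈ S, f s = 0) : f = 0 := by
  funext x
  rcases eq_or_ne x 0 with rfl | hx
  · by_cases hχ : χ = 1
    · exact hfS 0 (hS.zero_mem hχ)
    · exact apply_zero_eq_zero_of_mem_symmetricSubmodule hf hχ
  · obtain ⟨r, ⟨hr, h, rfl⟩, -⟩ := hS.existsUnique_of_ne_zero hx
    simp [hf h r, hfS r hr]

theorem symmetricExtension_mul (g : S → K) (h : H) (s : S) :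
    symmetricExtension χ S g (((h : Fˣ) : F) * s) = χ h * g s := by
  have hx : ∃ c : H × S, ((c.1 : Fˣ) : F) * c.2 = ((h : Fˣ) : F) * s := ⟨(h, s), rfl⟩
  obtain ⟨hs, hχ⟩ := hS.eq_and_eq_of_mul_eq hx.choose.2.2 s.2 hx.choose_spec
  rw [symmetricExtension, dif_pos hx, hχ, Subtype.ext hs]

theorem symmetricExtension_apply (g : S → K) (s : S) : symmetricExtension χ S g s = g s := by
  simpa using hS.symmetricExtension_mul g 1 s

theorem symmetricExtension_mem (g : S → K) :
    symmetricExtension χ S g ∈ symmetricSubmodule H χ := by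
  intro h x
  by_cases hx : ∃ c : H × S, ((c.1 : Fˣ) : F) * c.2 = x
  · obtain ⟨⟨h₀, s⟩, rfl⟩ := hx
    rw [← mul_assoc, ← Units.val_mul, ← Subgroup.coe_mul, hS.symmetricExtension_mul,
      hS.symmetricExtension_mul, map_mul, Units.val_mul, mul_assoc]
  · have hhx : ¬∃ c : H × S, ((c.1 : Fˣ) : F) * c.2 = ((h : Fˣ) : F) * x := by
      rintro ⟨⟨h₁, s⟩, hc⟩
      refine hx ⟨(h⁻¹ * h₁, s), ?_⟩
      simp [mul_assoc, hc]
    simp only [symmetricExtension, dif_neg hx, dif_neg hhx, mul_zero]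

theorem bijective_restrict :
    Function.Bijective
      (LinearMap.funLeft K K ((↑) : S → F) ∘ₗ (symmetricSubmodule H χ).subtype) := by
  refine ⟨(injective_iff_map_eq_zero _).mpr fun f hf => ?_, fun g => ?_⟩
  · exact Subtype.ext (hS.eq_zero_of_forall_mem_eq_zero f.2 fun s hs => congrFun hf ⟨s, hs⟩)
  · exact ⟨⟨_, hS.symmetricExtension_mem g⟩, funext (hS.symmetricExtension_apply g)⟩

theorem finrank_symmetricSubmodule :
    Module.finrank K (symmetricSubmodule H χ) = S.card := by
  rw [(LinearEquiv.ofBijective _ hS.bijective_restrict).finrank_eq,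
    Module.finrank_fintype_fun_eq_card, Fintype.card_coe]

end IsSymmetricReprSet

end Symmetric

namespace AddChar

variable {R K : Type*} [CommRing R] [Fintype R] [CommRing K]

def fourierTransform (ψ : AddChar R K) : (R → K) →ₗ[K] R → K where
  toFun f a := ∑ b, f b * ψ (a * b)
  map_add' f g := by
    funext a
    simp only [Pi.add_apply, add_mul, Finset.sum_add_distrib]
  map_smul' c f := by
    funext a
    simp only [Pi.smul_apply, smul_eq_mul, RingHom.id_apply, Finset.mul_sum, mul_assoc]

theorem fourierTransform_apply (ψ : AddChar R K) (f : R → K) (a : R) :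
    fourierTransform ψ f a = ∑ b, f b * ψ (a * b) :=
  rfl

theorem fourierTransform_inv_fourierTransform [IsDomain K] {ψ : AddChar R K}
    (hψ : ψ.IsPrimitive) (f : R → K) :
    fourierTransform ψ⁻¹ (fourierTransform ψ f) = (Fintype.card R : K) • f := by
  classical
  funext c
  have hterm : ∀ a b, f b * ψ (a * b) * ψ⁻¹ (c * a) = f b * ψ (a * (b - c)) := by
    intro a b
    rw [AddChar.inv_apply, mul_assoc, ← AddChar.map_add_eq_mul, mul_sub, mul_comm c a,
      sub_eq_add_neg]
  calc fourierTransform ψ⁻¹ (fourierTransform ψ f) c = ∑ b, f b * ∑ a, ψ (a * (b - c)) := by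
        simp only [fourierTransform_apply, Finset.sum_mul, hterm, Finset.mul_sum]
        exact Finset.sum_comm
    _ = ∑ b, if b = c then f b * Fintype.card R else 0 := by
        simp only [AddChar.sum_mulShift _ hψ, sub_eq_zero, Nat.cast_ite, Nat.cast_zero, mul_ite,
          mul_zero]
    _ = ((Fintype.card R : K) • f) c := by
        rw [Finset.sum_ite_eq' Finset.univ c, if_pos (Finset.mem_univ c), Pi.smul_apply,
          smul_eq_mul, mul_comm]

theorem fourierTransform_injective [IsDomain K] {ψ : AddChar R K} (hψ : ψ.IsPrimitive)
    (hR : (Fintype.card R : K) ≠ 0) : Function.Injective (fourierTransform ψ) := by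
  intro f g hfg
  have hinv := congrArg (fourierTransform ψ⁻¹) hfg
  rw [fourierTransform_inv_fourierTransform hψ, fourierTransform_inv_fourierTransform hψ] at hinv
  exact smul_right_injective _ hR hinv

end AddChar

section SymmetricFourier

variable {F K : Type*} [Field F] [Fintype F] [Field K] {H : Subgroup Fˣ} {χ : H →* Kˣ}

theorem fourierTransform_mem_symmetricSubmodule_inv (ψ : AddChar F K) {f : F → K}
    (hf : f ∈ symmetricSubmodule H χ) : ψ.fourierTransform f ∈ symmetricSubmodule H χ⁻¹ := by
  intro h a
  set u : Fˣ := (h : Fˣ)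
  have hfu : ∀ c, f ((u : F)⁻¹ * c) = (χ h : K)⁻¹ * f c := by
    intro c
    simpa [u, map_inv, Units.val_inv_eq_inv_val] using hf h⁻¹ c
  calc ψ.fourierTransform f (u * a) = ∑ b, f ((u : F)⁻¹ * (u * b)) * ψ (a * (u * b)) := by
        rw [AddChar.fourierTransform_apply]
        refine Finset.sum_congr rfl fun b _ => ?_
        rw [inv_mul_cancel_left₀ u.ne_zero, mul_left_comm a, ← mul_assoc]
    _ = ∑ c, f ((u : F)⁻¹ * c) * ψ (a * c) :=
        Equiv.sum_comp (Units.mulLeft u) fun c => f ((u : F)⁻¹ * c) * ψ (a * c)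
    _ = (χ⁻¹ h : K) * ψ.fourierTransform f a := by
        simp only [hfu, AddChar.fourierTransform_apply, Finset.mul_sum, mul_assoc,
          MonoidHom.inv_apply, Units.val_inv_eq_inv_val]

theorem IsSymmetricReprSet.injective_restrict_fourierTransform {S : Finset F}
    (hS : IsSymmetricReprSet H χ S) {ψ : AddChar F K}
    (hψ : ψ.IsPrimitive) (hF : (Fintype.card F : K) ≠ 0) :
    Function.Injective (LinearMap.funLeft K K ((↑) : S → F) ∘ₗ ψ.fourierTransform ∘ₗ
      (symmetricSubmodule H χ).subtype) := by
  refine (injective_iff_map_eq_zero _).mpr fun f hf =>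
    Subtype.ext (AddChar.fourierTransform_injective hψ hF ?_)
  rw [ZeroMemClass.coe_zero, map_zero]
  exact hS.inv.eq_zero_of_forall_mem_eq_zero (fourierTransform_mem_symmetricSubmodule_inv ψ f.2)
    fun s hs => congrFun hf ⟨s, hs⟩

end SymmetricFourier

namespace canonicalAddChar

variable (p : ℕ) [Fact p.Prime] (F : Type*) [Field F] [CharP F p]

noncomputable def toAddChar : AddChar F ℂ :=
  let _ := ZMod.algebra F p
  (AddChar.zmodChar p
      (Complex.isPrimitiveRoot_exp p (Fact.out : p.Prime).ne_zero).pow_eq_one).compAddMonoidHom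
    (Algebra.trace (ZMod p) F).toAddMonoidHom

theorem coe_toAddChar : ⇑(toAddChar p F) = canonicalAddChar p F := by
  let _ := ZMod.algebra F p
  funext x
  rw [toAddChar, AddChar.compAddMonoidHom_apply, AddChar.zmodChar_apply, canonicalAddChar,
    ← Complex.exp_nat_mul, LinearMap.toAddMonoidHom_coe]
  congr 1
  ring

theorem isPrimitive_toAddChar [Finite F] : (toAddChar p F).IsPrimitive := by
  let _ := ZMod.algebra F p
  refine AddChar.IsPrimitive.of_ne_one (AddChar.ne_one_iff.mpr ?_)
  obtain ⟨b, hb⟩ := Algebra.trace_surjective (ZMod p) F 1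
  refine ⟨b, ?_⟩
  rw [toAddChar, AddChar.compAddMonoidHom_apply, LinearMap.toAddMonoidHom_coe, hb]
  exact ((AddChar.zmodChar_primitive_of_primitive_root p
    (Complex.isPrimitiveRoot_exp p (Fact.out : p.Prime).ne_zero)).zmod_char_eq_one_iff p 1).not.mpr
    one_ne_zero

end canonicalAddChar

theorem chi_symmetric_space_dim_and_fourier_iso (p : ℕ) [Fact p.Prime] (F : Type*)
    [Field F] [Fintype F] [CharP F p] (H : Subgroup Fˣ) (χ : H →* ℂˣ) (S : Finset F)
    (hStriv : χ = 1 → IsOrbitReprSet H Set.univ S)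
    (hSnontriv : χ ≠ 1 → IsOrbitReprSet H {x : F | x ≠ 0} S) :
    ∃ V : Submodule ℂ (F → ℂ),
      (∀ f : F → ℂ, f ∈ V ↔
        ∀ (h : H) (x : F), f (((h : Fˣ) : F) * x) = (χ h : ℂ) * f x) ∧
      Module.finrank ℂ V = S.card ∧
      ∃ e : V ≃ₗ[ℂ] (S → ℂ),
        ∀ (f : V) (s : S), e f s = ∑ b : F, (f : F → ℂ) b * canonicalAddChar p F ((s : F) * b) := by
  have hS : IsSymmetricReprSet H χ S := ⟨hStriv, hSnontriv⟩
  have hinj := hS.injective_restrict_fourierTransform (canonicalAddChar.isPrimitive_toAddChar p F)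
    (Nat.cast_ne_zero.mpr Fintype.card_ne_zero)
  refine ⟨symmetricSubmodule H χ, fun f => mem_symmetricSubmodule, hS.finrank_symmetricSubmodule,
    LinearMap.linearEquivOfInjective _ hinj ?_, fun f s => ?_⟩
  · rw [hS.finrank_symmetricSubmodule, Module.finrank_fintype_fun_eq_card, Fintype.card_coe]
  · simp [AddChar.fourierTransform_apply, canonicalAddChar.coe_toAddChar]
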